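/- arXiv:0910.3531 — 5 statements merged into one kernel-verified Lean document; each statement's English description precedes it below -/
import Mathlib

section
/- Let μ = μ₁ + μ₂ i be a complex number with μ₁ ≥ 0, let 0 ≤ λ₀ < 1, and let u₂, v₁ be real numbers with v₁ ≤ −(1−λ₀)(1+u₂²)/2. Set w = λ₀ + (1−λ₀) u₂ i and assume μ + w ≠ 0. Then Re( w + v₁/(μ + w) ) ≤ λ₀. -/
open Complex

theorem Complex.re_ofReal_div_nonpos {v : ℝ} {z : ℂ} (hv : v ≤ 0) (hz : 0 ≤ z.re) :
    ((v : ℂ) / z).re ≤ 0 := by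
  rw [div_eq_mul_inv, re_ofReal_mul, inv_re]
  exact mul_nonpos_of_nonpos_of_nonneg hv (div_nonneg hz (normSq_nonneg z))

theorem admissibility_boundary_general (μ : ℂ) (hμ : 0 ≤ μ.re)
    (lam u₂ v₁ : ℝ) (hlam0 : 0 ≤ lam) (hlam1 : lam < 1)
    (hv : v₁ ≤ -(1 - lam) * (1 + u₂ ^ 2) / 2) :
    ((((lam : ℂ) + (1 - (lam : ℂ)) * (u₂ : ℂ) * I)
      + (v₁ : ℂ) / (μ + ((lam : ℂ) + (1 - (lam : ℂ)) * (u₂ : ℂ) * I))).re) ≤ lam := by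
  have hv₁ : v₁ ≤ 0 := hv.trans (by nlinarith [sq_nonneg u₂])
  have hw : ((lam : ℂ) + (1 - (lam : ℂ)) * (u₂ : ℂ) * I).re = lam := by simp
  have hden : 0 ≤ (μ + ((lam : ℂ) + (1 - (lam : ℂ)) * (u₂ : ℂ) * I)).re := by
    rw [add_re, hw]
    linarith
  rw [add_re, hw]
  linarith [re_ofReal_div_nonpos hv₁ hden]

/-- Boundary-condition verification for the admissibility lemma applied to
`ψ(u,v) = u + v/(μ+u)`. -/
theorem admissibility_boundary (μ : ℂ) (hμ : 0 ≤ μ.re)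
    (lam u₂ v₁ : ℝ) (hlam0 : 0 ≤ lam) (hlam1 : lam < 1)
    (hv : v₁ ≤ -(1 - lam) * (1 + u₂ ^ 2) / 2)
    (hne : μ + ((lam : ℂ) + (1 - (lam : ℂ)) * (u₂ : ℂ) * I) ≠ 0) :
    ((((lam : ℂ) + (1 - (lam : ℂ)) * (u₂ : ℂ) * I)
      + (v₁ : ℂ) / (μ + ((lam : ℂ) + (1 - (lam : ℂ)) * (u₂ : ℂ) * I))).re) ≤ lam :=
  admissibility_boundary_general μ hμ lam u₂ v₁ hlam0 hlam1 hv
end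

section
/- The function q(z) = z²/((1−z)((1−z)·Log(1−z) + z)) − 1 (with Log the principal branch and q(0) := 1 as a removable singularity) satisfies the differential equation q(z) + z q'(z)/(1 + q(z)) = (1+z)/(1−z) for all z in the open unit disk where the denominators are nonzero. -/
open Complex Metric

/-- The best dominant for the Libera operator: with `q(0) := 1` and otherwise
`q(z) = z²/((1−z)((1−z)Log(1−z)+z)) − 1`. -/
noncomputable def qLibera : ℂ → ℂ := fun z =>
  if z = 0 then 1 else z ^ 2 / ((1 - z) * ((1 - z) * Complex.log (1 - z) + z)) - 1

/-!
Write `q = z²/P − 1` with `P(z) = (1−z)((1−z)Log(1−z)+z)`. Then `1 + q = z²/P`, so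
`z q'/(1+q) = 2 − zP'/P`, and since `P' = −2(1−z)Log(1−z) − z` one gets
`z² − zP' = 2z((1−z)Log(1−z)+z)`, i.e. `q + z q'/(1+q) = 1 + 2z/(1−z) = (1+z)/(1−z)`.
-/

namespace Libera

noncomputable def denom (z : ℂ) : ℂ := (1 - z) * ((1 - z) * log (1 - z) + z)

lemma one_sub_mem_slitPlane {z : ℂ} (hz : z ∈ ball (0 : ℂ) 1) : 1 - z ∈ slitPlane := by
  rw [sub_eq_add_neg]
  exact mem_slitPlane_of_norm_lt_one (by simpa using hz)

lemma hasDerivAt_one_sub (z : ℂ) : HasDerivAt (fun w ↦ 1 - w) (-1) z := by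
  simpa using (hasDerivAt_id z).const_sub 1

lemma hasDerivAt_one_sub_mul_log_one_sub_add {z : ℂ} (hz : 1 - z ∈ slitPlane) :
    HasDerivAt (fun w ↦ (1 - w) * log (1 - w) + w) (-log (1 - z)) z := by
  have hsub := hasDerivAt_one_sub z
  refine ((hsub.mul (hsub.clog hz)).add (hasDerivAt_id z)).congr_deriv ?_
  field_simp [slitPlane_ne_zero hz]
  ring

lemma hasDerivAt_denom {z : ℂ} (hz : 1 - z ∈ slitPlane) :
    HasDerivAt denom (-2 * (1 - z) * log (1 - z) - z) z := by
  have hsub := hasDerivAt_one_sub z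
  refine (hsub.mul (hasDerivAt_one_sub_mul_log_one_sub_add hz)).congr_deriv ?_
  ring

lemma briot_bouquet_identity {K : Type*} [Field K] {z L P : K} (hz : z ≠ 0) (h1z : 1 - z ≠ 0)
    (hPdef : P = (1 - z) * ((1 - z) * L + z)) (hP : P ≠ 0) :
    (z ^ 2 / P - 1) + z * ((2 * z * P - z ^ 2 * (-2 * (1 - z) * L - z)) / P ^ 2) /
      (1 + (z ^ 2 / P - 1)) = (1 + z) / (1 - z) := by
  field_simp
  subst hPdef
  ring

lemma qLibera_eq_of_ne_zero {z : ℂ} (hz : z ≠ 0) : qLibera z = z ^ 2 / denom z - 1 :=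
  if_neg hz

lemma hasDerivAt_qLibera {z : ℂ} (hz : z ≠ 0) (hslit : 1 - z ∈ slitPlane) (hP : denom z ≠ 0) :
    HasDerivAt qLibera
      ((2 * z * denom z - z ^ 2 * (-2 * (1 - z) * log (1 - z) - z)) / denom z ^ 2) z := by
  have hq : (fun w ↦ w ^ 2 / denom w - 1) =ᶠ[nhds z] qLibera := by
    filter_upwards [isOpen_ne.mem_nhds hz] with w hw
    exact (qLibera_eq_of_ne_zero hw).symm
  refine HasDerivAt.congr_of_eventuallyEq ?_ hq.symm
  simpa using ((hasDerivAt_pow 2 z).div (hasDerivAt_denom hslit) hP).sub_const 1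

end Libera

open Libera in
/-- `q` solves the Briot–Bouquet equation `q + z q'/(1+q) = (1+z)/(1-z)` on the unit disk,
wherever the denominators are nonzero. -/
theorem briot_bouquet_mu_one :
    ∀ z ∈ ball (0 : ℂ) 1,
      (1 - z) * ((1 - z) * Complex.log (1 - z) + z) ≠ 0 →
      1 + qLibera z ≠ 0 →
      qLibera z + z * deriv qLibera z / (1 + qLibera z) = (1 + z) / (1 - z) := by
  intro z hz hP _
  rcases eq_or_ne z 0 with rfl | hz0
  · simp [qLibera]
  have hslit := one_sub_mem_slitPlane hz
  rw [(hasDerivAt_qLibera hz0 hslit hP).deriv, qLibera_eq_of_ne_zero hz0]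
  exact briot_bouquet_identity hz0 (slitPlane_ne_zero hslit) rfl hP
end

section
/- Let f be analytic on the unit disk E with f(0) = 0, f'(0) = 1, f(z) ≠ 0 for z ≠ 0, and suppose f is starlike, i.e. Re(z f'(z)/f(z)) > 0 on E. Define the Alexander-type operator F(z) = ∫₀^z f(t)/t dt. Then Re(z F'(z)/F(z)) > 1/2 for all z ∈ E, i.e. F is starlike of order 1/2. -/
open Complex Metric

open Set Filter
open scoped Topology ComplexConjugate

/-!
Put `q = F / f`, extended by `q 0 = 1`. Since `Re (1 / q) > 1/2` exactly when `|q - 1| < 1`,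
it suffices to show `|g| < 1` for `g = q - 1`, which vanishes at `0`. If not, Jack's lemma gives
`z₀ ≠ 0` with `|g z₀| ≥ 1` and `z₀ g'(z₀) = k g(z₀)` for a real `k ≥ 1`. From `z F' = f` one gets
`z q' = 1 - p q` with `p = z f' / f`, so `k a = 1 - p (1 + a)` for `a = g z₀`, and this forces
`Re p ≤ 0`, contradicting starlikeness of `f`.

Jack's lemma: at a point `z₀` of the circle `|z| = r` where `|g|` is maximal on `|z| ≤ r`, the
tangential derivative of `|g|²` vanishes, so `z₀ g'(z₀) / g(z₀)` is real, and Schwarz's lemma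
`|g (t z₀)| ≤ t |g z₀|` bounds the radial derivative below, so this real number is at least `1`.
-/

theorem Complex.real_inner_mul_right_self (c w : ℂ) : inner ℝ w (c * w) = c.re * ‖w‖ ^ 2 := by
  rw [Complex.inner, mul_assoc, mul_conj, normSq_eq_norm_sq, re_mul_ofReal]

theorem im_mul_deriv_div_eq_zero_of_isMaxOn_sphere {g : ℂ → ℂ} {z₀ : ℂ}
    (hg : DifferentiableAt ℂ g z₀) (hne : g z₀ ≠ 0)
    (hmax : IsMaxOn (‖g ·‖) (sphere 0 ‖z₀‖) z₀) :
    (z₀ * deriv g z₀ / g z₀).im = 0 := by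
  set v := z₀ * deriv g z₀ / g z₀
  have hv : z₀ * deriv g z₀ = v * g z₀ := (div_mul_cancel₀ _ hne).symm
  set γ : ℝ → ℂ := fun θ ↦ z₀ * exp (θ * I)
  have hγ : HasDerivAt γ (z₀ * I) 0 := by
    simpa using (((hasDerivAt_id (0 : ℝ)).ofReal_comp.mul_const I).cexp).const_mul z₀
  have hγ0 : γ 0 = z₀ := by simp [γ]
  have hgγ : HasDerivAt (g ∘ γ) (v * I * g z₀) 0 :=
    (HasDerivAt.comp 0 (by rw [hγ0]; exact hg.hasDerivAt) hγ).congr_deriv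
      (by linear_combination I * hv)
  have hlocal : IsLocalMax (fun θ ↦ ‖g (γ θ)‖ ^ 2) 0 := by
    refine Eventually.of_forall fun θ ↦ ?_
    have hθ : γ θ ∈ sphere 0 ‖z₀‖ := by simp [γ, norm_exp_ofReal_mul_I]
    simpa [hγ0] using pow_le_pow_left₀ (norm_nonneg _) (hmax hθ) 2
  have h := hlocal.hasDerivAt_eq_zero hgγ.norm_sq
  rw [Function.comp_apply, hγ0, real_inner_mul_right_self] at h
  simpa [hne] using h

theorem one_le_re_mul_deriv_div_of_norm_le {g : ℂ → ℂ} {z₀ : ℂ}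
    (hg : DifferentiableAt ℂ g z₀) (hne : g z₀ ≠ 0)
    (hle : ∀ t ∈ Icc (0 : ℝ) 1, ‖g (t * z₀)‖ ≤ t * ‖g z₀‖) :
    1 ≤ (z₀ * deriv g z₀ / g z₀).re := by
  set v := z₀ * deriv g z₀ / g z₀
  have hv : z₀ * deriv g z₀ = v * g z₀ := (div_mul_cancel₀ _ hne).symm
  set γ : ℝ → ℂ := fun t ↦ t * z₀
  have hγ : HasDerivAt γ z₀ 1 := by simpa using (hasDerivAt_id (1 : ℝ)).ofReal_comp.mul_const z₀
  have hγ1 : γ 1 = z₀ := by simp [γ]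
  have hgγ : HasDerivAt (g ∘ γ) (v * g z₀) 1 :=
    (HasDerivAt.comp 1 (by rw [hγ1]; exact hg.hasDerivAt) hγ).congr_deriv (by linear_combination hv)
  have hh := hgγ.norm_sq.sub ((hasDerivAt_mul_const ‖g z₀‖).pow 2)
  have hmax : IsMaxOn (fun t ↦ ‖g (γ t)‖ ^ 2 - (t * ‖g z₀‖) ^ 2) (Icc 0 1) 1 := by
    intro t ht
    have := pow_le_pow_left₀ (norm_nonneg _) (hle t ht) 2
    simp only [mem_ofPred_eq, hγ1, one_mul, sub_self]
    linarith
  have hseg : (-1 : ℝ) ∈ posTangentConeAt (Icc 0 1) 1 :=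
    mem_posTangentConeAt_of_segment_subset (by norm_num [segment_symm ℝ (1 : ℝ), segment_eq_Icc])
  have h := hmax.localize.hasFDerivWithinAt_nonpos hh.hasFDerivAt.hasFDerivWithinAt hseg
  simp only [Function.comp_apply, hγ1, real_inner_mul_right_self,
    ContinuousLinearMap.toSpanSingleton_apply] at h
  norm_num at h
  nlinarith [pow_pos (norm_pos_iff.2 hne) 2]

theorem jack_lemma {g : ℂ → ℂ} {r : ℝ} {z₀ : ℂ} (hg : DifferentiableOn ℂ g (ball 0 r))
    (hgz₀ : DifferentiableAt ℂ g z₀) (hg0 : g 0 = 0) (hz₀ : ‖z₀‖ = r)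
    (hmax : IsMaxOn (‖g ·‖) (closedBall 0 r) z₀) (hne : g z₀ ≠ 0) :
    ∃ k : ℝ, 1 ≤ k ∧ z₀ * deriv g z₀ = k * g z₀ := by
  have hr : 0 < r := hz₀ ▸ norm_pos_iff.2 (by rintro rfl; exact hne hg0)
  have hschwarz : ∀ t ∈ Icc (0 : ℝ) 1, ‖g (t * z₀)‖ ≤ t * ‖g z₀‖ := by
    rintro t ⟨ht0, ht1⟩
    rcases ht1.lt_or_eq with ht1 | rfl
    · have hmaps : MapsTo g (ball 0 r) (closedBall (g 0) ‖g z₀‖) := fun z hz ↦ by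
        simpa [hg0] using hmax (ball_subset_closedBall hz)
      have hmem : (t : ℂ) * z₀ ∈ ball 0 r := by
        simpa [norm_mul, hz₀, abs_of_nonneg ht0] using mul_lt_of_lt_one_left hr ht1
      have := dist_le_div_mul_dist_of_mapsTo_ball hg hmaps hmem
      simp only [dist_zero_right, hg0, norm_mul, norm_real, Real.norm_of_nonneg ht0, hz₀] at this
      exact this.trans_eq (by field_simp)
    · simp
  refine ⟨(z₀ * deriv g z₀ / g z₀).re, one_le_re_mul_deriv_div_of_norm_le hgz₀ hne hschwarz, ?_⟩
  have him := im_mul_deriv_div_eq_zero_of_isMaxOn_sphere hgz₀ hne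
    (hmax.on_subset (hz₀ ▸ sphere_subset_closedBall))
  have hreal : ((z₀ * deriv g z₀ / g z₀).re : ℂ) = z₀ * deriv g z₀ / g z₀ :=
    Complex.ext (ofReal_re _) (by rw [ofReal_im, him])
  rw [hreal, div_mul_cancel₀ _ hne]

theorem exists_jack_point {g : ℂ → ℂ} {R : ℝ} (hg : DifferentiableOn ℂ g (ball 0 R))
    (hg0 : g 0 = 0) {z₁ : ℂ} (hz₁ : z₁ ∈ ball (0 : ℂ) R) (hgz₁ : g z₁ ≠ 0) :
    ∃ z₀ ∈ ball (0 : ℂ) R, z₀ ≠ 0 ∧ ‖g z₁‖ ≤ ‖g z₀‖ ∧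
      ∃ k : ℝ, 1 ≤ k ∧ z₀ * deriv g z₀ = k * g z₀ := by
  set r := ‖z₁‖
  have hr : 0 < r := norm_pos_iff.2 (by rintro rfl; exact hgz₁ hg0)
  have hrR : closedBall (0 : ℂ) r ⊆ ball 0 R := closedBall_subset_ball (by simpa using hz₁)
  obtain ⟨z₀, hz₀, hmax⟩ := exists_mem_frontier_isMaxOn_norm isBounded_ball
    (nonempty_ball.2 hr) (hg.diffContOnCl_ball hrR)
  rw [frontier_ball 0 hr.ne'] at hz₀
  rw [closure_ball 0 hr.ne'] at hmax
  have hz₀R : z₀ ∈ ball (0 : ℂ) R := hrR (sphere_subset_closedBall hz₀)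
  have hle : ‖g z₁‖ ≤ ‖g z₀‖ := hmax (mem_closedBall_zero_iff.2 le_rfl)
  have hne : g z₀ ≠ 0 := norm_pos_iff.1 ((norm_pos_iff.2 hgz₁).trans_le hle)
  refine ⟨z₀, hz₀R, fun h ↦ hne (h ▸ hg0), hle,
    jack_lemma (hg.mono (ball_subset_closedBall.trans hrR))
      (hg.differentiableAt (isOpen_ball.mem_nhds hz₀R)) hg0 (by simpa using hz₀) hmax hne⟩

theorem re_nonpos_of_ofReal_mul_eq_one_sub_mul {a p : ℂ} {k : ℝ} (hk : 1 ≤ k) (ha : 1 ≤ ‖a‖)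
    (h : k * a = 1 - p * (1 + a)) : p.re ≤ 0 := by
  rcases eq_or_ne (1 + a) 0 with h1a | h1a
  · have := congrArg re h
    simp [show a = -1 by linear_combination h1a] at this
    linarith
  have hre : p.re * normSq (1 + a) = 1 + (1 - k) * a.re - k * ‖a‖ ^ 2 := by
    have hconj : p * normSq (1 + a) = (1 - k * a) * conj (1 + a) := by
      rw [← mul_conj]; linear_combination conj (1 + a) * h
    have := congrArg re hconj
    rw [re_mul_ofReal] at this
    rw [Complex.sq_norm]
    simp only [normSq_apply, mul_re, mul_im, sub_re, sub_im, one_re, one_im, add_re, add_im,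
      conj_re, conj_im, ofReal_re, ofReal_im] at this ⊢
    linear_combination this
  have hre_ge : -‖a‖ ≤ a.re := neg_le_of_abs_le (abs_re_le_norm a)
  have : 1 + (1 - k) * a.re - k * ‖a‖ ^ 2 ≤ 0 := by
    nlinarith [mul_nonneg (sub_nonneg.2 hk) (by linarith : (0:ℝ) ≤ a.re + ‖a‖),
        mul_nonneg (by linarith : (0:ℝ) ≤ ‖a‖ - 1) (by positivity : (0:ℝ) ≤ k * ‖a‖ + 1)]
  nlinarith [normSq_pos.2 h1a]

theorem mul_deriv_div_eq_one_sub_mul {f F : ℂ → ℂ} {z : ℂ} (hf : DifferentiableAt ℂ f z)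
    (hF : HasDerivAt F (f z / z) z) (hz : z ≠ 0) (hfz : f z ≠ 0) :
    z * deriv (F / f) z = 1 - z * deriv f z / f z * (F z / f z) := by
  rw [(hF.div hf.hasDerivAt hfz).deriv]
  field_simp

theorem one_half_lt_re_inv_of_norm_sub_one_lt_one {w : ℂ} (hw : ‖w - 1‖ < 1) :
    1 / 2 < w⁻¹.re := by
  have hsq : normSq (w - 1) < 1 := by
    rw [normSq_eq_norm_sq]; nlinarith [norm_nonneg (w - 1)]
  have hw0 : 0 < normSq w := normSq_pos.2 (by rintro rfl; simp at hw)
  rw [inv_re, lt_div_iff₀ hw0]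
  simp only [normSq_apply, sub_re, sub_im, one_re, one_im] at hsq ⊢
  nlinarith

theorem norm_div_sub_one_lt_one_of_starlike {f F : ℂ → ℂ}
    (hf : DifferentiableOn ℂ f (ball 0 1)) (hf0 : f 0 = 0) (hf'0 : deriv f 0 ≠ 0)
    (hfne : ∀ z ∈ ball (0 : ℂ) 1, z ≠ 0 → f z ≠ 0)
    (hstar : ∀ z ∈ ball (0 : ℂ) 1, z ≠ 0 → 0 < (z * deriv f z / f z).re)
    (hF : DifferentiableOn ℂ F (ball 0 1)) (hF0 : F 0 = 0) (h'0 : deriv F 0 = deriv f 0)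
    (hF' : ∀ z ∈ ball (0 : ℂ) 1, z ≠ 0 → deriv F z = f z / z) :
    ∀ z ∈ ball (0 : ℂ) 1, z ≠ 0 → ‖F z / f z - 1‖ < 1 := by
  set q : ℂ → ℂ := dslope F 0 / dslope f 0
  have hq : ∀ z ≠ 0, q z = F z / f z := fun z hz ↦ by
    simp only [q, Pi.div_apply, dslope_of_ne _ hz, slope_def_field, hf0, hF0, sub_zero]
    exact div_div_div_cancel_right₀ hz _ _
  have hdslope_ne : ∀ z ∈ ball (0 : ℂ) 1, dslope f 0 z ≠ 0 := fun z hz ↦ by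
    rcases eq_or_ne z 0 with rfl | hz0
    · rwa [dslope_same]
    · rw [dslope_of_ne _ hz0, slope_def_field, hf0, sub_zero, sub_zero]
      exact div_ne_zero (hfne z hz hz0) hz0
  have hball : ball (0 : ℂ) 1 ∈ 𝓝 0 := ball_mem_nhds 0 one_pos
  have hqd : DifferentiableOn ℂ q (ball 0 1) :=
    ((differentiableOn_dslope hball).2 hF).div ((differentiableOn_dslope hball).2 hf) hdslope_ne
  have hq0 : q 0 = 1 := by simp [q, dslope_same, h'0, hf'0]
  intro z hz hz0
  by_contra! h1
  rw [← hq z hz0] at h1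
  obtain ⟨z₀, hz₀, hz₀0, hle, k, hk, hjack⟩ := exists_jack_point (hqd.sub_const 1)
    (by simp [hq0]) hz (norm_pos_iff.1 (one_pos.trans_le h1))
  have hderiv : deriv (fun w ↦ q w - 1) z₀ = deriv (F / f) z₀ := by
    rw [deriv_sub_const]
    exact Filter.EventuallyEq.deriv_eq (eventually_ne_nhds hz₀0 |>.mono hq)
  have hF'z₀ : HasDerivAt F (f z₀ / z₀) z₀ :=
    hF' z₀ hz₀ hz₀0 ▸ (hF.differentiableAt (isOpen_ball.mem_nhds hz₀)).hasDerivAt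
  have hode := mul_deriv_div_eq_one_sub_mul (hf.differentiableAt (isOpen_ball.mem_nhds hz₀))
    hF'z₀ hz₀0 (hfne z₀ hz₀ hz₀0)
  refine (hstar z₀ hz₀ hz₀0).not_ge (re_nonpos_of_ofReal_mul_eq_one_sub_mul hk (h1.trans hle) ?_)
  rw [← hjack, hderiv, hode, hq z₀ hz₀0]
  ring

/-- The Alexander-type operator `F(z) = ∫₀^z f(t)/t dt` maps starlike functions to
functions starlike of order `1/2`. -/
theorem alexander_starlike_half (f F : ℂ → ℂ)
    (hf : AnalyticOn ℂ f (ball (0 : ℂ) 1))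
    (hf0 : f 0 = 0) (hf'0 : deriv f 0 = 1)
    (hfne : ∀ z ∈ ball (0 : ℂ) 1, z ≠ 0 → f z ≠ 0)
    (hstar : ∀ z ∈ ball (0 : ℂ) 1, z ≠ 0 → 0 < (z * deriv f z / f z).re)
    (hF : AnalyticOn ℂ F (ball (0 : ℂ) 1))
    (hF0 : F 0 = 0) (hF'0 : deriv F 0 = 1)
    (hF' : ∀ z ∈ ball (0 : ℂ) 1, z ≠ 0 → deriv F z = f z / z) :
    ∀ z ∈ ball (0 : ℂ) 1, z ≠ 0 → 1 / 2 < (z * deriv F z / F z).re := by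
  intro z hz hz0
  have hinv : z * deriv F z / F z = (F z / f z)⁻¹ := by
    rw [hF' z hz hz0, mul_div_cancel₀ _ hz0, inv_div]
  rw [hinv]
  exact one_half_lt_re_inv_of_norm_sub_one_lt_one <|
    norm_div_sub_one_lt_one_of_starlike hf.differentiableOn hf0 (hf'0 ▸ one_ne_zero) hfne hstar
      hF.differentiableOn hF0 (hF'0.trans hf'0.symm) hF' z hz hz0
end

section
/- Let E denote the unit disk. If p is analytic on E, p(0) = 1, p is nonvanishing on E, and Re( p(z) + z p'(z)/p(z) ) > 1/2 for all z ∈ E, then Re p(z) > 1/2 on E. -/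
open Complex Metric

lemma norm_lt_iff_re (a : ℂ) (ha : a ≠ 0) : ‖(1 - a) / a‖ < 1 ↔ 1 / 2 < a.re := by
  have hpos : (0:ℝ) < ‖a‖ := norm_pos_iff.2 ha
  rw [norm_div, div_lt_one hpos]
  have e1 := Complex.normSq_eq_norm_sq (1 - a)
  have e2 := Complex.normSq_eq_norm_sq a
  simp only [Complex.normSq_apply, Complex.sub_re, Complex.sub_im, Complex.one_re,
    Complex.one_im] at e1 e2
  have h1 : (0:ℝ) ≤ ‖(1:ℂ) - a‖ := norm_nonneg _
  constructor <;> intro h <;> nlinarith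

lemma norm_eq_one_re (a : ℂ) (ha : a ≠ 0) (h : ‖(1 - a) / a‖ = 1) : a.re = 1/2 := by
  have hpos : (0:ℝ) < ‖a‖ := norm_pos_iff.2 ha
  rw [norm_div, div_eq_one_iff_eq (ne_of_gt hpos)] at h
  have e1 := Complex.normSq_eq_norm_sq (1 - a)
  have e2 := Complex.normSq_eq_norm_sq a
  simp only [Complex.normSq_apply, Complex.sub_re, Complex.sub_im, Complex.one_re,
    Complex.one_im] at e1 e2
  nlinarith

/-- The `μ = 0`, `λ₀ = 1/2` instance of the admissibility argument: if `p` is analytic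
and nonvanishing on the unit disk with `p(0) = 1` and `Re(p + z p'/p) > 1/2` there,
then `Re p > 1/2` on the disk. -/
theorem admissibility_half (p : ℂ → ℂ)
    (hp : AnalyticOn ℂ p (ball (0 : ℂ) 1)) (hp0 : p 0 = 1)
    (hpne : ∀ z ∈ ball (0 : ℂ) 1, p z ≠ 0)
    (hre : ∀ z ∈ ball (0 : ℂ) 1, 1 / 2 < (p z + z * deriv p z / p z).re) :
    ∀ z ∈ ball (0 : ℂ) 1, 1 / 2 < (p z).re := by
  have hpN : AnalyticOnNhd ℂ p (ball (0:ℂ) 1) :=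
    (isOpen_ball.analyticOn_iff_analyticOnNhd).mp hp
  set w : ℂ → ℂ := fun ζ => (1 - p ζ) / p ζ with hw_def
  have hw0 : w 0 = 0 := by simp [hw_def, hp0]
  have hwA : ∀ y ∈ ball (0:ℂ) 1, AnalyticAt ℂ w y := fun y hy =>
    (analyticAt_const.sub (hpN y hy)).div (hpN y hy) (hpne y hy)
  have hwC : ContinuousOn w (ball (0:ℂ) 1) := fun y hy =>
    ((hwA y hy).continuousAt).continuousWithinAt
  intro z₀ hz₀
  by_contra hcon
  -- so ‖w z₀‖ ≥ 1
  have hwz₀ : 1 ≤ ‖w z₀‖ := by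
    by_contra h'
    exact hcon ((norm_lt_iff_re (p z₀) (hpne z₀ hz₀)).1 (lt_of_not_ge h'))
  have hz₀1 : ‖z₀‖ < 1 := mem_ball_zero_iff.1 hz₀
  -- the critical radius
  set S : Set ℝ := {r : ℝ | 0 ≤ r ∧ r ≤ ‖z₀‖ ∧ ∀ x : ℂ, ‖x‖ ≤ r → ‖w x‖ < 1} with hS_def
  have hS0 : (0:ℝ) ∈ S := by
    refine ⟨le_refl 0, norm_nonneg _, fun x hx => ?_⟩
    have : x = 0 := norm_le_zero_iff.1 hx
    simp [this, hw0]
  have hSne : S.Nonempty := ⟨0, hS0⟩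
  have hSbdd : BddAbove S := ⟨‖z₀‖, fun r hr => hr.2.1⟩
  set R : ℝ := sSup S with hR_def
  have hR0 : 0 ≤ R := le_csSup hSbdd hS0
  have hRz₀ : R ≤ ‖z₀‖ := csSup_le hSne (fun r hr => hr.2.1)
  have hR1 : R < 1 := lt_of_le_of_lt hRz₀ hz₀1
  have claim1 : ∀ x : ℂ, ‖x‖ < R → ‖w x‖ < 1 := by
    intro x hx
    obtain ⟨r, hrS, hxr⟩ := exists_lt_of_lt_csSup hSne hx
    exact hrS.2.2 x hxr.le
  have claim2 : ∀ x : ℂ, ‖x‖ ≤ R → ‖w x‖ ≤ 1 := by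
    intro x hx
    rcases eq_or_ne x 0 with rfl | hx0
    · simp [hw0]
    · have hxball : x ∈ ball (0:ℂ) 1 := mem_ball_zero_iff.2 (lt_of_le_of_lt hx hR1)
      have hxpos : 0 < ‖x‖ := norm_pos_iff.2 hx0
      have hcont : ContinuousAt w x := (hwA x hxball).continuousAt
      have h1 : Filter.Tendsto (fun t : ℝ => ((t:ℂ) * x)) (nhdsWithin 1 (Set.Iio 1)) (nhds x) := by
        have h0 : Filter.Tendsto (fun t : ℝ => ((t:ℂ) * x)) (nhds 1) (nhds x) := by
          have h := Filter.Tendsto.mul (Complex.continuous_ofReal.tendsto (1:ℝ))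
            (tendsto_const_nhds (x := x))
          simpa using h
        exact h0.mono_left nhdsWithin_le_nhds
      have h2 : Filter.Tendsto (fun t : ℝ => ‖w ((t:ℂ) * x)‖)
          (nhdsWithin 1 (Set.Iio 1)) (nhds ‖w x‖) := ((hcont.tendsto.comp h1).norm)
      refine le_of_tendsto h2 ?_
      filter_upwards [Ioo_mem_nhdsLT_of_mem (Set.mem_Ioc.2 ⟨zero_lt_one, le_refl (1:ℝ)⟩)]
        with t ht
      refine (claim1 _ ?_).le
      have : ‖((t:ℂ) * x)‖ = t * ‖x‖ := by
        rw [norm_mul, Complex.norm_real, Real.norm_eq_abs, abs_of_pos ht.1]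
      rw [this]
      calc t * ‖x‖ < 1 * ‖x‖ := by exact mul_lt_mul_of_pos_right ht.2 hxpos
      _ = ‖x‖ := one_mul _
      _ ≤ R := hx
  have claim3 : ∃ z₁ : ℂ, ‖z₁‖ = R ∧ ‖w z₁‖ = 1 := by
    rcases eq_or_lt_of_le hRz₀ with hcase | hRlt
    · exact ⟨z₀, hcase.symm, le_antisymm (claim2 z₀ hcase.ge) hwz₀⟩
    · by_contra hno
      push_neg at hno
      have hall : ∀ x : ℂ, ‖x‖ ≤ R → ‖w x‖ < 1 := by
        intro x hx
        rcases lt_or_eq_of_le hx with h | h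
        · exact claim1 x h
        · exact (claim2 x hx).lt_of_ne (hno x h)
      set V : Set ℂ := ball (0:ℂ) 1 ∩ w ⁻¹' (ball (0:ℂ) 1) with hV_def
      have hVopen : IsOpen V := hwC.isOpen_inter_preimage isOpen_ball isOpen_ball
      have hKV : closedBall (0:ℂ) R ⊆ V := by
        intro x hx
        rw [mem_closedBall_zero_iff] at hx
        exact ⟨mem_ball_zero_iff.2 (lt_of_le_of_lt hx hR1),
          by simpa [mem_ball_zero_iff] using hall x hx⟩
      obtain ⟨δ, hδ, hsub⟩ :=
        (isCompact_closedBall (0:ℂ) R).exists_cthickening_subset_open hVopen hKV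
      have hthick : cthickening δ (closedBall (0:ℂ) R) = closedBall (0:ℂ) (δ + R) :=
        cthickening_closedBall hδ.le hR0 0
      set r' : ℝ := min (R + δ) ‖z₀‖ with hr'_def
      have hr'S : r' ∈ S := by
        refine ⟨le_min (by linarith) (norm_nonneg _), min_le_right _ _, fun x hx => ?_⟩
        have hx' : x ∈ closedBall (0:ℂ) (δ + R) := by
          rw [mem_closedBall_zero_iff]
          calc ‖x‖ ≤ r' := hx
          _ ≤ R + δ := min_le_left _ _
          _ = δ + R := by ring
        have : x ∈ V := hsub (hthick ▸ hx')
        simpa [mem_ball_zero_iff] using this.2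
      have : r' ≤ R := le_csSup hSbdd hr'S
      have hr'R : R < r' := lt_min (by linarith) hRlt
      linarith
  obtain ⟨z₁, hz₁R, hwz₁⟩ := claim3
  have hRpos : 0 < R := by
    rcases hR0.lt_or_eq with h | h
    · exact h
    · exfalso
      have : z₁ = 0 := norm_eq_zero.1 (hz₁R.trans h.symm)
      rw [this, hw0] at hwz₁
      simp at hwz₁
  have hz₁ball : z₁ ∈ ball (0:ℂ) 1 := mem_ball_zero_iff.2 (hz₁R ▸ hR1)
  -- derivative of w at z₁
  have hpd : DifferentiableAt ℂ p z₁ := (hpN z₁ hz₁ball).differentiableAt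
  have hpz₁ : p z₁ ≠ 0 := hpne z₁ hz₁ball
  set a : ℂ := p z₁ with ha_def
  set P' : ℂ := deriv p z₁ with hP'_def
  set D : ℂ := -P' / a ^ 2 with hD_def
  have hwD : HasDerivAt w D z₁ := by
    have h1 : HasDerivAt p P' z₁ := hpd.hasDerivAt
    have h2 : HasDerivAt (fun ζ => (1:ℂ) - p ζ) (-P') z₁ := h1.const_sub 1
    have h3 := h2.div h1 hpz₁
    have he : -P' / a ^ 2 = (-P' * a - (1 - a) * P') / a ^ 2 := by
      congr 1
      ring
    rw [hD_def, he]
    exact h3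
  set v : ℂ := D * z₁ with hv_def
  set w₁ : ℂ := w z₁ with hw₁_def
  -- radial derivative fact : 0 ≤ Re(v * conj w₁)
  have hone : ((1:ℝ):ℂ) * z₁ = z₁ := by norm_num
  have hu : HasDerivAt (fun t : ℝ => w ((t:ℂ) * z₁)) v 1 := by
    have hmul : HasDerivAt (fun ζ : ℂ => ζ * z₁) z₁ (1:ℂ) := by
      simpa using (hasDerivAt_id (1:ℂ)).mul_const z₁
    have hwD' : HasDerivAt w D ((1:ℂ) * z₁) := by rwa [one_mul]
    have hcomp := hwD'.comp (1:ℂ) hmul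
    exact (HasDerivAt.comp_ofReal (e := fun ζ => w (ζ * z₁)) (by rw [Complex.ofReal_one]; exact hcomp))
  have hur : HasDerivAt (fun t : ℝ => (w ((t:ℂ) * z₁)).re) v.re 1 := by
    have := Complex.reCLM.hasFDerivAt.comp_hasDerivAt 1 hu
    exact this
  have hui : HasDerivAt (fun t : ℝ => (w ((t:ℂ) * z₁)).im) v.im 1 := by
    have := Complex.imCLM.hasFDerivAt.comp_hasDerivAt 1 hu
    exact this
  have hh : HasDerivAt
      (fun t : ℝ => (w ((t:ℂ) * z₁)).re * (w ((t:ℂ) * z₁)).re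
        + (w ((t:ℂ) * z₁)).im * (w ((t:ℂ) * z₁)).im)
      (2 * (w₁.re * v.re + w₁.im * v.im)) 1 := by
    have := (hur.mul hur).add (hui.mul hui)
    rw [hone] at this
    refine this.congr_deriv ?_
    rw [hw₁_def]
    ring
  have hradial : 0 ≤ w₁.re * v.re + w₁.im * v.im := by
    set hfun : ℝ → ℝ := fun t => (w ((t:ℂ) * z₁)).re * (w ((t:ℂ) * z₁)).re
        + (w ((t:ℂ) * z₁)).im * (w ((t:ℂ) * z₁)).im with hfun_def
    have hf1 : hfun 1 = 1 := by
      have : Complex.normSq (w z₁) = 1 := by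
        rw [Complex.normSq_eq_norm_sq, hwz₁]; norm_num
      rw [hfun_def]
      simp only [hone]
      rw [← Complex.normSq_apply]
      exact this
    have hmax : ∀ t ∈ Set.Ioo (0:ℝ) 1, hfun t ≤ hfun 1 := by
      intro t ht
      rw [hf1, hfun_def]
      have hlt : ‖(t:ℂ) * z₁‖ < R := by
        rw [norm_mul, Complex.norm_real, Real.norm_eq_abs, abs_of_pos ht.1, hz₁R]
        calc t * R < 1 * R := mul_lt_mul_of_pos_right ht.2 hRpos
        _ = R := one_mul R
      have := claim1 _ hlt
      have h2 : Complex.normSq (w ((t:ℂ) * z₁)) < 1 := by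
        rw [Complex.normSq_eq_norm_sq]
        nlinarith [norm_nonneg (w ((t:ℂ) * z₁))]
      simpa [← Complex.normSq_apply] using h2.le
    have hslope := hasDerivAt_iff_tendsto_slope.mp hh
    have hslope' : Filter.Tendsto (slope hfun 1) (nhdsWithin 1 (Set.Iio 1))
        (nhds (2 * (w₁.re * v.re + w₁.im * v.im))) :=
      hslope.mono_left (nhdsWithin_mono _ (fun x hx => ne_of_lt hx))
    have hge : 0 ≤ 2 * (w₁.re * v.re + w₁.im * v.im) := by
      refine ge_of_tendsto hslope' ?_
      filter_upwards [Ioo_mem_nhdsLT_of_mem (Set.mem_Ioc.2 ⟨zero_lt_one, le_refl (1:ℝ)⟩)]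
        with t ht
      rw [slope_def_field]
      apply div_nonneg_of_nonpos
      · linarith [hmax t ht]
      · linarith [ht.2]
    linarith
  -- tangential derivative fact : Im part vanishes
  have htangent : w₁.re * v.im - w₁.im * v.re = 0 := by
    have hexp0 : Complex.exp (((0:ℝ):ℂ) * Complex.I) * z₁ = z₁ := by
      norm_num
    have hg : HasDerivAt (fun ζ : ℂ => Complex.exp (ζ * Complex.I) * z₁)
        (Complex.I * z₁) 0 := by
      have h1 : HasDerivAt (fun ζ : ℂ => ζ * Complex.I) Complex.I (0:ℂ) := by
        simpa using (hasDerivAt_id (0:ℂ)).mul_const Complex.I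
      have h2 := h1.cexp
      have h3 := h2.mul_const z₁
      simpa using h3
    have hwD'' : HasDerivAt w D (Complex.exp ((0:ℂ) * Complex.I) * z₁) := by
      simpa using hwD
    have hcomp := hwD''.comp (0:ℂ) hg
    have h5 : HasDerivAt (fun ζ : ℂ => w (Complex.exp (ζ * Complex.I) * z₁))
        (Complex.I * v) 0 := by
      have heq : D * (Complex.I * z₁) = Complex.I * v := by rw [hv_def]; ring
      rw [← heq]
      exact hcomp
    have h6 : HasDerivAt (fun ζ : ℂ => w (Complex.exp (ζ * Complex.I) * z₁))
        (Complex.I * v) (((0:ℝ):ℂ)) := by simpa using h5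
    have hut : HasDerivAt (fun θ : ℝ => w (Complex.exp ((θ:ℂ) * Complex.I) * z₁))
        (Complex.I * v) 0 := h6.comp_ofReal
    have hutr : HasDerivAt (fun θ : ℝ => (w (Complex.exp ((θ:ℂ) * Complex.I) * z₁)).re)
        (Complex.I * v).re 0 := by
      have := Complex.reCLM.hasFDerivAt.comp_hasDerivAt 0 hut
      exact this
    have huti : HasDerivAt (fun θ : ℝ => (w (Complex.exp ((θ:ℂ) * Complex.I) * z₁)).im)
        (Complex.I * v).im 0 := by
      have := Complex.imCLM.hasFDerivAt.comp_hasDerivAt 0 hut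
      exact this
    set kfun : ℝ → ℝ := fun θ => (w (Complex.exp ((θ:ℂ) * Complex.I) * z₁)).re
        * (w (Complex.exp ((θ:ℂ) * Complex.I) * z₁)).re
        + (w (Complex.exp ((θ:ℂ) * Complex.I) * z₁)).im
        * (w (Complex.exp ((θ:ℂ) * Complex.I) * z₁)).im with hkfun_def
    have hk : HasDerivAt kfun
        (2 * (w₁.re * (Complex.I * v).re + w₁.im * (Complex.I * v).im)) 0 := by
      have := (hutr.mul hutr).add (huti.mul huti)
      rw [hexp0] at this
      refine this.congr_deriv ?_
      rw [hw₁_def]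
      ring
    have hk0 : kfun 0 = 1 := by
      rw [hkfun_def]
      simp only [hexp0]
      rw [← Complex.normSq_apply, Complex.normSq_eq_norm_sq, hwz₁]
      norm_num
    have hmax : IsLocalMax kfun 0 := by
      apply Filter.Eventually.of_forall
      intro θ
      rw [hk0]
      have hnorm : ‖Complex.exp ((θ:ℂ) * Complex.I) * z₁‖ ≤ R := by
        rw [norm_mul, Complex.norm_exp_ofReal_mul_I, one_mul, hz₁R]
      have := claim2 _ hnorm
      have h2 : Complex.normSq (w (Complex.exp ((θ:ℂ) * Complex.I) * z₁)) ≤ 1 := by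
        rw [Complex.normSq_eq_norm_sq]
        nlinarith [norm_nonneg (w (Complex.exp ((θ:ℂ) * Complex.I) * z₁))]
      simpa [hkfun_def, ← Complex.normSq_apply] using h2
    have hzero := hmax.hasDerivAt_eq_zero hk
    have hIre : (Complex.I * v).re = -v.im := by simp [Complex.mul_re]
    have hIim : (Complex.I * v).im = v.re := by simp [Complex.mul_im]
    rw [hIre, hIim] at hzero
    linarith
  -- algebraic conclusion
  have hw₁a : w₁ = (1 - a) / a := rfl
  have hnormSq1 : w₁ * (starRingEnd ℂ) w₁ = 1 := by
    rw [Complex.mul_conj]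
    have : Complex.normSq w₁ = 1 := by
      rw [Complex.normSq_eq_norm_sq, hwz₁]; norm_num
    rw [this]; norm_num
  set c : ℂ := v * (starRingEnd ℂ) w₁ with hc_def
  have hcre : 0 ≤ c.re := by
    rw [hc_def]
    simp only [Complex.mul_re, Complex.conj_re, Complex.conj_im]
    linarith [hradial]
  have hcim : c.im = 0 := by
    rw [hc_def]
    simp only [Complex.mul_im, Complex.conj_re, Complex.conj_im]
    linarith [htangent]
  have hvc : v = c * w₁ := by
    calc v = v * (w₁ * (starRingEnd ℂ) w₁) := by rw [hnormSq1, mul_one]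
    _ = c * w₁ := by rw [hc_def]; ring
  have ha_re : a.re = 1/2 := by
    apply norm_eq_one_re a hpz₁
    rw [← hw₁a]
    exact hwz₁
  have hDa : D * a ^ 2 = -P' := by
    rw [hD_def]
    field_simp
  have hva : v * a = c * (1 - a) := by
    rw [hvc, hw₁a]
    field_simp
  have e1 : v * a * a = -P' * z₁ := by
    rw [hv_def]
    linear_combination z₁ * hDa
  have hb2 : z₁ * P' = -(c * (1 - a) * a) := by
    linear_combination e1 - a * hva
  have hfin : 1/2 < (a + z₁ * P' / a).re := by
    have := hre z₁ hz₁ball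
    rw [ha_def, hP'_def]
    exact this
  have hq : a + z₁ * P' / a = a - c * (1 - a) := by
    rw [hb2]
    field_simp
    ring
  rw [hq] at hfin
  simp only [Complex.sub_re, Complex.mul_re, Complex.sub_im, Complex.one_re, Complex.one_im,
    hcim, ha_re] at hfin
  linarith
end

section
/- The function g(r) = 1/((1+r)((1+r) ln(1+r) − r)) − 1 is strictly decreasing on (0, 1], and g(1) = (3 − 4 ln 2)/(2(2 ln 2 − 1)) > 0. -/
/-!
Writing `D(r) = (1 + r)((1 + r) log(1 + r) - r)` (`liberaDenom`), `g = 1 / D - 1`, so it suffices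
that `D` is positive and strictly increasing for `r > 0`. Both follow from
`r < (1 + r) log(1 + r)`, which is `log x < x - 1` at `x = 1 / (1 + r)`: it gives `D > 0` directly
and `D'(r) = 2(1 + r) log(1 + r) - r > r > 0`. The value `g(1)` is arithmetic, and its positivity
is `1/2 < log 2 < 3/4`.
-/

open Real Set

noncomputable def liberaDenom (r : ℝ) : ℝ := (1 + r) * ((1 + r) * log (1 + r) - r)

lemma lt_one_add_mul_log_one_add {r : ℝ} (hr : 0 < r) : r < (1 + r) * log (1 + r) := by
  have h1 : 0 < 1 + r := by linarith
  have hlog := log_lt_sub_one_of_pos (inv_pos.2 h1) (inv_ne_one.2 (by linarith))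
  rw [log_inv] at hlog
  have hcancel : (1 + r) * (1 + r)⁻¹ = 1 := mul_inv_cancel₀ h1.ne'
  nlinarith

lemma hasDerivAt_liberaDenom {x : ℝ} (hx : 1 + x ≠ 0) :
    HasDerivAt liberaDenom (2 * (1 + x) * log (1 + x) - x) x := by
  have hlin : HasDerivAt (fun r : ℝ => 1 + r) 1 x := (hasDerivAt_id x).const_add 1
  have hlog : HasDerivAt (fun r : ℝ => log (1 + r)) (1 / (1 + x)) x := by
    simpa using hlin.log hx
  have hinner : HasDerivAt (fun r : ℝ => (1 + r) * log (1 + r) - r) (log (1 + x)) x := by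
    refine ((hlin.mul hlog).sub (hasDerivAt_id' x)).congr_deriv ?_
    rw [mul_one_div_cancel hx]
    ring
  refine (hlin.mul hinner).congr_deriv ?_
  ring

lemma strictMonoOn_liberaDenom : StrictMonoOn liberaDenom (Ici 0) := by
  apply strictMonoOn_of_deriv_pos (convex_Ici 0)
  · intro x hx
    exact (hasDerivAt_liberaDenom (by linarith [mem_Ici.1 hx])).continuousAt.continuousWithinAt
  · intro x hx
    rw [interior_Ici, mem_Ioi] at hx
    rw [(hasDerivAt_liberaDenom (by linarith)).deriv]
    linarith [lt_one_add_mul_log_one_add hx]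

/-- The function `g(r) = 1/((1+r)((1+r) ln(1+r) − r)) − 1` is strictly decreasing on
`(0,1]`, and `g(1) = (3 − 4 ln 2)/(2(2 ln 2 − 1)) > 0`. -/
theorem libera_bound_monotone :
    StrictAntiOn (fun r : ℝ => 1 / ((1 + r) * ((1 + r) * Real.log (1 + r) - r)) - 1)
      (Set.Ioc (0 : ℝ) 1) ∧
    (1 / ((1 + 1) * ((1 + 1) * Real.log (1 + 1) - 1)) - 1
        = (3 - 4 * Real.log 2) / (2 * (2 * Real.log 2 - 1))) ∧
    0 < (3 - 4 * Real.log 2) / (2 * (2 * Real.log 2 - 1)) := by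
  have hlog2_lower : 0 < 2 * log 2 - 1 := by linarith [log_two_gt_d9]
  have hlog2_upper : 0 < 3 - 4 * log 2 := by linarith [log_two_lt_d9]
  refine ⟨?_, ?_, by positivity⟩
  · intro x hx y hy hxy
    have hD_pos : 0 < liberaDenom x :=
      mul_pos (by linarith [hx.1]) (sub_pos.2 (lt_one_add_mul_log_one_add hx.1))
    have hD_lt := strictMonoOn_liberaDenom (mem_Ici.2 hx.1.le) (mem_Ici.2 hy.1.le) hxy
    exact sub_lt_sub_right (one_div_lt_one_div_of_lt hD_pos hD_lt) 1
  · norm_num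
    field_simp
    ring
end
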